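/- Let u and v be nonempty finite words over the positive integers such that the complex matrices A_u and A_v have a common eigenvector z ∈ ℂ² ∖ {0}. Then there exist a finite word t and positive integers m₁, m₂ such that u = t^{m₁} (t concatenated with itself m₁ times) and v = t^{m₂}; moreover, z is also an eigenvector of A_t. -/

import Mathlib

open Matrix Filter

/-- The matrix `A_a = [[0,1],[1,a]]` associated to a letter `a`. -/
def Amat (a : ℕ) : Matrix (Fin 2) (Fin 2) ℤ := !![0, 1; 1, (a : ℤ)]

/-- The matrix `A_u` associated to a finite word `u` (product of the `A_a`). -/
def Aword (u : List ℕ) : Matrix (Fin 2) (Fin 2) ℤ := (u.map Amat).prod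

/-- The prefix of length `n` of an infinite word `w`. -/
def wordPrefix (w : ℕ → ℕ) (n : ℕ) : List ℕ := (List.range n).map w

/-- The left shift `T^m w` of an infinite word. -/
def shiftW (w : ℕ → ℕ) (m : ℕ) : ℕ → ℕ := fun i => w (m + i)

/-- Distance from a real number to the nearest integer. -/
noncomputable def distNearestInt (t : ℝ) : ℝ := |t - round t|

/-- `q ∈ PBad_ε` : `q` is a `p`-adically badly approximable vector with constant `ε`. -/
def PBadE (p : ℕ) [Fact p.Prime] (ε : ℝ) (q : Fin 2 → ℚ_[p]) : Prop :=
  ∀ a b : ℤ, ¬(a = 0 ∧ b = 0) →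
    ε / max ((a : ℝ) ^ 2) ((b : ℝ) ^ 2) ≤
      ‖(a : ℚ_[p]) * q 0 + (b : ℚ_[p]) * q 1‖ / max ‖q 0‖ ‖q 1‖

/-- An integer matrix viewed as a matrix over `ℚ_[p]`. -/
noncomputable def matQ (p : ℕ) [Fact p.Prime] (M : Matrix (Fin 2) (Fin 2) ℤ) :
    Matrix (Fin 2) (Fin 2) ℚ_[p] := M.map Int.cast

/-- `(w, y) ∈ LMad_ε`. -/
def LMadE (p : ℕ) [Fact p.Prime] (ε : ℝ) (w : ℕ → ℕ) (y : Fin 2 → ℚ_[p]) : Prop :=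
  (∀ n, 1 ≤ w n ∧ (w n : ℤ) ≤ ⌊ε⁻¹⌋ + 1) ∧
  ∀ n : ℕ, PBadE p ε (Matrix.mulVec (matQ p (Aword (wordPrefix w n))ᵀ) y)

/-- `(w, y) ∈ LMad`. -/
def LMad (p : ℕ) [Fact p.Prime] (w : ℕ → ℕ) (y : Fin 2 → ℚ_[p]) : Prop :=
  ∃ ε > 0, LMadE p ε w y

/-- The projective distance `d` on nonzero vectors of `ℚ_[p]²`. -/
noncomputable def pdist (p : ℕ) [Fact p.Prime] (u v : Fin 2 → ℚ_[p]) : ℝ :=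
  ‖u 0 * v 1 - u 1 * v 0‖ / (max ‖u 0‖ ‖u 1‖ * max ‖v 0‖ ‖v 1‖)

/-- `q ∈ B_k(w, y)` : `q` is `p^{-k}`-close to some `(A_{w_n})ᵀ y`. -/
def inBk (p : ℕ) [Fact p.Prime] (k : ℕ) (w : ℕ → ℕ) (y : Fin 2 → ℚ_[p])
    (q : Fin 2 → ℚ_[p]) : Prop :=
  q ≠ 0 ∧ ∃ n : ℕ,
    pdist p q (Matrix.mulVec (matQ p (Aword (wordPrefix w n))ᵀ) y) ≤ (p : ℝ) ^ (-(k : ℤ))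

/-- `U_k(w)` : set of reductions mod `p^k` of the matrices of all prefixes of `w`. -/
def Uk (p k : ℕ) (w : ℕ → ℕ) : Set (Matrix (Fin 2) (Fin 2) (ZMod (p ^ k))) :=
  { M | ∃ n : ℕ, M = (Aword (wordPrefix w n)).map Int.cast }

/-- The finite word `u` occurs in `w` at position `m`. -/
def occursAt (w : ℕ → ℕ) (u : List ℕ) (m : ℕ) : Prop :=
  u = (List.range u.length).map fun i => w (m + i)

/-- `u` is a factor of the infinite word `w`. -/
def IsFactor (u : List ℕ) (w : ℕ → ℕ) : Prop := ∃ m, occursAt w u m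

/-- `w` is recurrent: every factor occurs infinitely often. -/
def Recurrent (w : ℕ → ℕ) : Prop :=
  ∀ u : List ℕ, IsFactor u w → ∀ M : ℕ, ∃ m, M ≤ m ∧ occursAt w u m

/-- `w` is uniformly recurrent: recurrent with bounded gaps between occurrences. -/
def UniformlyRecurrent (w : ℕ → ℕ) : Prop :=
  Recurrent w ∧
    ∀ u : List ℕ, IsFactor u w →
      ∃ d : ℕ, ∀ m : ℕ, ∃ m', m ≤ m' ∧ m' ≤ m + d ∧ occursAt w u m'

/-- The complexity `P(w, n)` : number of distinct factors of `w` of length `n`. -/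
noncomputable def complexity (w : ℕ → ℕ) (n : ℕ) : ℕ :=
  Set.ncard { u : List ℕ | u.length = n ∧ IsFactor u w }

/-- `a` is the sequence of partial quotients of the continued fraction expansion of `x`,
obtained by iterating the Gauss map. -/
def IsCFSeq (x : ℝ) (a : ℕ → ℕ) : Prop :=
  ∃ ξ : ℕ → ℝ, ξ 0 = x ∧
    ∀ n, (0 < ξ n ∧ ξ n < 1) ∧ ((a n : ℤ) = ⌊(ξ n)⁻¹⌋) ∧ ξ (n + 1) = (ξ n)⁻¹ - (a n : ℝ)

/-- `Q` is the (index-shifted) sequence of denominators of the convergents of the continued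
fraction with partial quotients `a` : `Q (n+1)` is the paper's `q_n`. -/
def IsCFDen (a : ℕ → ℕ) (Q : ℕ → ℤ) : Prop :=
  Q 0 = 0 ∧ Q 1 = 1 ∧ ∀ n, Q (n + 2) = (a n : ℤ) * Q (n + 1) + Q n

/-!
A common eigenvector `z` of `A_u` and `A_v` is killed by the integer matrix `A_u A_v - A_v A_u`.
If that matrix were nonzero, `z` would be proportional to an integer vector, so `A_u` would have a
rational eigenvalue; but `det A_u = ±1` and `tr A_u ≥ 1` (`≥ 3` when `det A_u = 1`), so the
discriminant `tr² - 4 det` lies strictly between two consecutive squares. Hence `A_{uv} = A_{vu}`,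
and as the first letter of a positive word can be read off its matrix, `uv = vu`: the words `u`
and `v` are powers of a common word `t`. Finally `A_t` commutes with `A_u`, which is not scalar,
so it preserves the eigenline of `A_u` through `z`.
-/

theorem List.exists_eq_flatten_replicate_of_append_comm {α : Type*} {u v : List α}
    (h : u ++ v = v ++ u) :
    ∃ (t : List α) (k l : ℕ), u = (replicate k t).flatten ∧ v = (replicate l t).flatten := by
  induction hn : u.length + v.length using Nat.strong_induction_on generalizing u v with
  | _ n ih =>
  wlog huv : u.length ≤ v.length generalizing u v
  · obtain ⟨t, k, l, hu, hv⟩ := this h.symm (by omega) (by omega)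
    exact ⟨t, l, k, hv, hu⟩
  rcases eq_or_ne u [] with rfl | hu
  · exact ⟨v, 0, 1, by simp, by simp⟩
  obtain ⟨w, rfl⟩ : u <+: v := prefix_of_prefix_length_le ⟨v, h⟩ ⟨u, rfl⟩ huv
  have hw : u ++ w = w ++ u := by simpa using h
  obtain ⟨t, k, l, rfl, rfl⟩ := ih _ (by simp [← hn, length_pos_iff.mpr hu]) hw rfl
  exact ⟨t, k, k + l, rfl, by rw [replicate_add, flatten_append]⟩

section TwoByTwo

variable {K : Type*} [Field K]

lemma discr_eq_sq_of_mulVec_eq_smul {A : Matrix (Fin 2) (Fin 2) K} {q : Fin 2 → K} (hq : q ≠ 0)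
    {μ : K} (h : A *ᵥ q = μ • q) : A.discr = (2 * μ - A.trace) ^ 2 := by
  have hdet : (A - μ • 1).det = 0 := exists_mulVec_eq_zero_iff.mp
    ⟨q, hq, by rw [sub_mulVec, h, smul_mulVec, one_mulVec, sub_self]⟩
  rw [det_fin_two] at hdet
  simp only [Matrix.sub_apply, Matrix.smul_apply, one_apply_eq, one_apply_ne zero_ne_one,
    one_apply_ne one_ne_zero, smul_eq_mul, mul_one, mul_zero, sub_zero] at hdet
  rw [discr_fin_two, trace_fin_two, det_fin_two]
  linear_combination (-4) * hdet

lemma exists_eq_smul_of_dotProduct_eq_zero {r z w : Fin 2 → K} (hr : r ≠ 0) (hz : z ≠ 0)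
    (hrz : r ⬝ᵥ z = 0) (hrw : r ⬝ᵥ w = 0) : ∃ c : K, w = c • z := by
  simp only [dotProduct, Fin.sum_univ_two] at hrz hrw
  have hcross : z 0 * w 1 = z 1 * w 0 := by
    by_cases h0 : r 0 = 0
    · have h1 : r 1 ≠ 0 := fun h1 => hr (by ext i; fin_cases i <;> simp [h0, h1])
      exact mul_left_cancel₀ h1 (by linear_combination z 0 * hrw - w 0 * hrz)
    · exact mul_left_cancel₀ h0 (by linear_combination w 1 * hrz - z 1 * hrw)
  by_cases h0 : z 0 = 0
  · have h1 : z 1 ≠ 0 := fun h1 => hz (by ext i; fin_cases i <;> simp [h0, h1])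
    refine ⟨w 1 / z 1, funext <| Fin.forall_fin_two.mpr ⟨?_, ?_⟩⟩
    · rw [Pi.smul_apply, smul_eq_mul, div_mul_eq_mul_div, eq_div_iff h1]
      linear_combination -hcross
    · rw [Pi.smul_apply, smul_eq_mul, div_mul_cancel₀ _ h1]
  · refine ⟨w 0 / z 0, funext <| Fin.forall_fin_two.mpr ⟨?_, ?_⟩⟩
    · rw [Pi.smul_apply, smul_eq_mul, div_mul_cancel₀ _ h0]
    · rw [Pi.smul_apply, smul_eq_mul, div_mul_eq_mul_div, eq_div_iff h0]
      linear_combination hcross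

lemma exists_mulVec_eq_smul_of_commute {M N : Matrix (Fin 2) (Fin 2) K} (hM : M 0 1 ≠ 0)
    (hMN : Commute M N) {z : Fin 2 → K} (hz : z ≠ 0) {l : K} (hl : M *ᵥ z = l • z) :
    ∃ μ : K, N *ᵥ z = μ • z := by
  -- `z` and `N z` both lie in the kernel of the nonzero first row of `M - l`.
  have hrow : ∀ x, ![M 0 0 - l, M 0 1] ⬝ᵥ x = (M *ᵥ x) 0 - l * x 0 := fun x => by
    simp only [dotProduct, mulVec, Fin.sum_univ_two, cons_val_zero, cons_val_one,
      cons_val_fin_one]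
    ring
  have hNz : M *ᵥ (N *ᵥ z) = l • (N *ᵥ z) := by
    rw [mulVec_mulVec, hMN.eq, ← mulVec_mulVec, hl, mulVec_smul]
  refine exists_eq_smul_of_dotProduct_eq_zero (r := ![M 0 0 - l, M 0 1]) ?_ hz ?_ ?_
  · exact fun h => hM (by simpa using congrFun h 1)
  · rw [hrow, hl]; simp
  · rw [hrow, hNz]; simp

end TwoByTwo

lemma isSquare_discr_of_mulVec_intCast_eq_smul {A : Matrix (Fin 2) (Fin 2) ℤ} {q : Fin 2 → ℤ}
    (hq : q ≠ 0) {l : ℂ}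
    (h : A.map (Int.cast : ℤ → ℂ) *ᵥ (Int.cast ∘ q) = l • (Int.cast ∘ q)) :
    IsSquare A.discr := by
  obtain ⟨i, hi⟩ := Function.ne_iff.mp hq
  have hqi : (q i : ℂ) ≠ 0 := by exact_mod_cast hi
  have hdiscr := discr_eq_sq_of_mulVec_eq_smul
    (fun h0 => hqi (by simpa using congrFun h0 i)) h
  have hcoord : l * q i = ((A *ᵥ q) i : ℤ) := by
    simpa [mulVec, dotProduct, Fin.sum_univ_two, mul_comm] using (congrFun h i).symm
  have hmap : (A.map (Int.cast : ℤ → ℂ)).discr = A.discr := by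
    simp [discr_fin_two, trace_fin_two, det_fin_two]
  -- `2 * l - tr A = (2 * (A *ᵥ q) i - tr A * q i) / q i` is rational.
  rw [← Rat.isSquare_intCast_iff]
  refine ⟨(2 * (A *ᵥ q) i - A.trace * q i) / q i, Rat.cast_injective (α := ℂ) ?_⟩
  push_cast
  rw [← hmap, hdiscr, ← hcoord]
  simp only [trace_fin_two, map_apply, Int.cast_add]
  field_simp

lemma commute_of_mulVec_eq_smul {A B : Matrix (Fin 2) (Fin 2) ℤ} (hA : ¬IsSquare A.discr)
    {z : Fin 2 → ℂ} (hz : z ≠ 0) {l μ : ℂ} (hAz : A.map (Int.cast : ℤ → ℂ) *ᵥ z = l • z)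
    (hBz : B.map (Int.cast : ℤ → ℂ) *ᵥ z = μ • z) : Commute A B := by
  by_contra hAB
  set C := A * B - B * A
  obtain ⟨i, hi⟩ : ∃ i, C i ≠ 0 := by
    by_contra! h
    exact hAB (sub_eq_zero.mp (funext h))
  have hCz : C.map (Int.cast : ℤ → ℂ) *ᵥ z = 0 := by
    change (Int.castRingHom ℂ).mapMatrix C *ᵥ z = 0
    simp only [C, map_sub, map_mul, RingHom.mapMatrix_apply]
    rw [sub_mulVec, ← mulVec_mulVec, ← mulVec_mulVec]
    simp only [Int.coe_castRingHom]
    rw [hBz, hAz, mulVec_smul, mulVec_smul, hAz, hBz, smul_smul, smul_smul, mul_comm,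
      sub_self]
  -- `z` is orthogonal to the nonzero integer row `C i`, hence a multiple of the integer vector `q`.
  set q : Fin 2 → ℤ := ![-C i 1, C i 0]
  have hq : q ≠ 0 := fun h0 => hi <| funext fun j => by
    fin_cases j
    · simpa [q] using congrFun h0 1
    · simpa [q] using congrFun h0 0
  obtain ⟨c, rfl⟩ := exists_eq_smul_of_dotProduct_eq_zero (r := Int.cast ∘ C i)
    (z := Int.cast ∘ q) (w := z) (fun h0 => hi (by ext j; simpa using congrFun h0 j))
    (fun h0 => hq (by ext j; simpa using congrFun h0 j))
    (by simp only [dotProduct, Function.comp_apply, Fin.sum_univ_two, q, cons_val_zero,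
      cons_val_one, cons_val_fin_one, Int.cast_neg]; ring) (congrFun hCz i)
  have hc : c ≠ 0 := by rintro rfl; simp at hz
  refine hA (isSquare_discr_of_mulVec_intCast_eq_smul hq (l := l) ?_)
  exact smul_right_injective _ hc (by
    change c • _ = c • _
    rw [← mulVec_smul, hAz, smul_comm])

lemma Aword_cons (a : ℕ) (w : List ℕ) : Aword (a :: w) = Amat a * Aword w := by
  simp [Aword]

lemma Aword_append (x y : List ℕ) : Aword (x ++ y) = Aword x * Aword y := by
  simp [Aword]

lemma Aword_flatten_replicate (m : ℕ) (t : List ℕ) :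
    Aword (List.replicate m t).flatten = Aword t ^ m := by
  induction m with
  | zero => rfl
  | succ m ih => rw [List.replicate_succ, List.flatten_cons, Aword_append, ih, pow_succ']

lemma det_Aword (w : List ℕ) : (Aword w).det = (-1) ^ w.length := by
  induction w with
  | nil => simp [Aword]
  | cons a w ih =>
    rw [Aword_cons, det_mul, ih, List.length_cons, pow_succ']
    simp [Amat, det_fin_two]

lemma Amat_mul (a : ℕ) (M : Matrix (Fin 2) (Fin 2) ℤ) :
    Amat a * M = !![M 1 0, M 1 1; M 0 0 + a * M 1 0, M 0 1 + a * M 1 1] := by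
  ext i j
  fin_cases i <;> fin_cases j <;> simp [Amat, mul_apply, Fin.sum_univ_two]

section PositiveWords

variable {w : List ℕ}

lemma Aword_entries (hw : w ≠ []) (hpos : ∀ b ∈ w, 1 ≤ b) :
    0 ≤ Aword w 0 0 ∧ 1 ≤ Aword w 1 0 ∧ 1 ≤ Aword w 0 1 ∧ Aword w 0 1 ≤ Aword w 1 1 := by
  induction w with
  | nil => contradiction
  | cons a w ih =>
    have ha : (1 : ℤ) ≤ a := mod_cast hpos a List.mem_cons_self
    rcases eq_or_ne w [] with rfl | hw'
    · simp [Aword, Amat, ha]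
    · obtain ⟨h00, h10, h01, h11⟩ := ih hw' fun b hb => hpos b (List.mem_cons_of_mem a hb)
      simp only [Aword_cons, Amat_mul, of_apply, cons_val', cons_val_zero, cons_val_one,
        empty_val', cons_val_fin_one]
      refine ⟨by omega, by nlinarith, by omega, by nlinarith⟩

lemma one_le_trace_Aword (hw : w ≠ []) (hpos : ∀ b ∈ w, 1 ≤ b) : 1 ≤ (Aword w).trace := by
  obtain ⟨h00, -, h01, h11⟩ := Aword_entries hw hpos
  rw [trace_fin_two]
  omega

lemma three_le_trace_Aword (hw : 2 ≤ w.length) (hpos : ∀ b ∈ w, 1 ≤ b) :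
    3 ≤ (Aword w).trace := by
  obtain _ | ⟨a, _ | ⟨b, w⟩⟩ := w
  · simp at hw
  · simp at hw
  have ha : (1 : ℤ) ≤ a := mod_cast hpos a List.mem_cons_self
  obtain ⟨-, h10, h01, h11⟩ := Aword_entries (w := b :: w) (List.cons_ne_nil b w)
    fun c hc => hpos c (List.mem_cons_of_mem a hc)
  rw [trace_fin_two, Aword_cons, Amat_mul]
  simp only [of_apply, cons_val', cons_val_zero, cons_val_one, empty_val', cons_val_fin_one]
  nlinarith

lemma not_isSquare_of_sq_lt_of_lt_sq {x m : ℤ} (hm : 0 ≤ m) (h₁ : m ^ 2 < x)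
    (h₂ : x < (m + 1) ^ 2) : ¬IsSquare x := by
  rintro ⟨k, rfl⟩
  rw [← sq] at h₁ h₂
  have hlo := sq_lt_sq.mp h₁
  have hhi := sq_lt_sq.mp h₂
  rw [abs_of_nonneg hm] at hlo
  rw [abs_of_nonneg (by omega : 0 ≤ m + 1)] at hhi
  omega

lemma not_isSquare_discr_Aword (hw : w ≠ []) (hpos : ∀ b ∈ w, 1 ≤ b) :
    ¬IsSquare (Aword w).discr := by
  have htr := one_le_trace_Aword hw hpos
  rw [discr_fin_two, det_Aword]
  rcases Nat.even_or_odd w.length with he | ho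
  · have hlen : 2 ≤ w.length := by
      obtain ⟨k, hk⟩ := he
      have := List.length_pos_iff.mpr hw
      omega
    have h3 := three_le_trace_Aword hlen hpos
    rw [he.neg_one_pow]
    exact not_isSquare_of_sq_lt_of_lt_sq (m := (Aword w).trace - 1) (by omega) (by nlinarith)
      (by nlinarith)
  · rw [ho.neg_one_pow]
    rcases htr.eq_or_lt with h1 | h2
    · rw [← h1]
      exact not_isSquare_of_sq_lt_of_lt_sq (m := 2) (by norm_num) (by norm_num) (by norm_num)
    · exact not_isSquare_of_sq_lt_of_lt_sq (m := (Aword w).trace) (by omega) (by nlinarith)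
        (by nlinarith)

end PositiveWords

lemma Amat_mul_left_cancel {a b : ℕ} {X Y : Matrix (Fin 2) (Fin 2) ℤ}
    (hXY : X 0 1 - Y 0 1 < X 1 1) (hYX : Y 0 1 - X 0 1 < Y 1 1)
    (h : Amat a * X = Amat b * Y) : a = b ∧ X = Y := by
  rw [Amat_mul, Amat_mul] at h
  have h₀₀ := congrFun₂ h 0 0
  have h₀₁ := congrFun₂ h 0 1
  have h₁₀ := congrFun₂ h 1 0
  have h₁₁ := congrFun₂ h 1 1
  simp only [of_apply, cons_val', cons_val_zero, cons_val_one, empty_val',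
    cons_val_fin_one] at h₀₀ h₀₁ h₁₀ h₁₁
  -- The rows give `(b - a) X₁₁ = X₀₁ - Y₀₁`, which the two gap bounds force to vanish.
  obtain rfl : a = b := by
    by_contra hne
    rcases Nat.lt_or_gt_of_ne hne with hlt | hlt
    · have : (a : ℤ) + 1 ≤ b := mod_cast hlt
      nlinarith
    · have : (b : ℤ) + 1 ≤ a := mod_cast hlt
      nlinarith
  rw [h₀₀] at h₁₀
  rw [h₀₁] at h₁₁
  refine ⟨rfl, ?_⟩
  ext i j
  fin_cases i <;> fin_cases j <;> simp <;> linarith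

lemma eq_of_Aword_eq : ∀ {x y : List ℕ}, (∀ b ∈ x, 1 ≤ b) → (∀ b ∈ y, 1 ≤ b) →
    x.length = y.length → Aword x = Aword y → x = y
  | [], [], _, _, _, _ => rfl
  | [], _ :: _, _, _, hlen, _ | _ :: _, [], _, _, hlen, _ => by simp at hlen
  | a :: x, b :: y, hx, hy, hlen, h => by
    have hx' : ∀ c ∈ x, 1 ≤ c := fun c hc => hx c (List.mem_cons_of_mem a hc)
    have hy' : ∀ c ∈ y, 1 ≤ c := fun c hc => hy c (List.mem_cons_of_mem b hc)
    have hlen' : x.length = y.length := by simpa using hlen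
    have hgap : Aword x 0 1 - Aword y 0 1 < Aword x 1 1 ∧
        Aword y 0 1 - Aword x 0 1 < Aword y 1 1 := by
      rcases eq_or_ne x [] with rfl | hxne
      · obtain rfl : y = [] := List.length_eq_zero_iff.mp hlen'.symm
        simp [Aword]
      · have hyne : y ≠ [] :=
          List.ne_nil_of_length_pos (hlen' ▸ List.length_pos_iff.mpr hxne)
        obtain ⟨-, -, hx₁, hx₂⟩ := Aword_entries hxne hx'
        obtain ⟨-, -, hy₁, hy₂⟩ := Aword_entries hyne hy'
        omega
    rw [Aword_cons, Aword_cons] at h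
    obtain ⟨rfl, hxy⟩ := Amat_mul_left_cancel hgap.1 hgap.2 h
    rw [eq_of_Aword_eq hx' hy' hlen' hxy]

/-- if `A_u` and `A_v` share a complex eigenvector `z` then `u` and `v`
are powers of a common word `t` and `z` is an eigenvector of `A_t`. -/
theorem stmt_17 (u v : List ℕ) (hu : u ≠ []) (hv : v ≠ [])
    (hupos : ∀ b ∈ u, 1 ≤ b) (hvpos : ∀ b ∈ v, 1 ≤ b)
    (z : Fin 2 → ℂ) (hz : z ≠ 0)
    (hzu : ∃ l : ℂ, Matrix.mulVec ((Aword u).map (Int.cast : ℤ → ℂ)) z = l • z)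
    (hzv : ∃ l : ℂ, Matrix.mulVec ((Aword v).map (Int.cast : ℤ → ℂ)) z = l • z) :
    ∃ (t : List ℕ) (m₁ m₂ : ℕ), 1 ≤ m₁ ∧ 1 ≤ m₂ ∧
      u = (List.replicate m₁ t).flatten ∧ v = (List.replicate m₂ t).flatten ∧
      ∃ l : ℂ, Matrix.mulVec ((Aword t).map (Int.cast : ℤ → ℂ)) z = l • z := by
  obtain ⟨l, hl⟩ := hzu
  obtain ⟨μ, hμ⟩ := hzv
  have hcomm : Commute (Aword u) (Aword v) :=
    commute_of_mulVec_eq_smul (not_isSquare_discr_Aword hu hupos) hz hl hμ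
  have huv : u ++ v = v ++ u :=
    eq_of_Aword_eq (fun b hb => (List.mem_append.mp hb).elim (hupos b) (hvpos b))
      (fun b hb => (List.mem_append.mp hb).elim (hvpos b) (hupos b))
      (by simp [Nat.add_comm]) (by rw [Aword_append, Aword_append, hcomm.eq])
  have hu01 : ((Aword u).map (Int.cast : ℤ → ℂ)) 0 1 ≠ 0 := by
    have := (Aword_entries hu hupos).2.2.1
    simp only [map_apply]
    exact_mod_cast (by omega : Aword u 0 1 ≠ 0)
  obtain ⟨t, m₁, m₂, rfl, rfl⟩ := List.exists_eq_flatten_replicate_of_append_comm huv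
  refine ⟨t, m₁, m₂, Nat.one_le_iff_ne_zero.mpr ?_, Nat.one_le_iff_ne_zero.mpr ?_, rfl, rfl, ?_⟩
  · rintro rfl; exact hu rfl
  · rintro rfl; exact hv rfl
  refine exists_mulVec_eq_smul_of_commute hu01 ?_ hz hl
  rw [Aword_flatten_replicate]
  exact ((Commute.refl (Aword t)).pow_left m₁).map (Int.castRingHom ℂ).mapMatrix
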